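/- arXiv:2105.10595 — 5 statements merged into one kernel-verified Lean document; each statement's English description precedes it below -/
import Mathlib

section
/- Let T be a rooted tree with n nodes and maximum degree Δ ≥ 2. For every binary string M of length ⌈log₂(n+1)⌉ + 1 there exists a subtree T' of T containing the root, in which every node has at most ⌊log₂ Δ⌋ + 1 children, together with an assignment of binary strings to the nodes of T' such that each node of T' is assigned a string of length at most 3, the root is assigned a string of length at most 2, and the concatenation of all assigned strings (in a suitable traversal order of T') equals M. -/
/-!
Grow the subtree along a heavy path. At a node `v` keep the child `u` with the most
descendants, recurse into it, and keep `m - 1` further children of `v` as leaves, where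
`m = min (#children v) (⌊log₂ Δ⌋ + 1)`. Then `v` has fewer than `2 ^ m` children, each with at
most `|desc u|` descendants, so `|desc v| + 1 ≤ 2 ^ m (|desc u| + 1)`: the `m` nodes added at `v`
pay for the `m` extra bits of `⌈log₂ (|desc v| + 1)⌉`. The subtree obtained at the root therefore
has at least `⌈log₂ (n + 1)⌉` nodes, so its capacity `2 + 3 (|S| - 1)` is at least the length of
`M`, and `M` is cut into consecutive pieces along any enumeration of `S` starting at the root.
-/

open Finset

theorem List.exists_flatten_map_eq {α β : Type*} [DecidableEq α] (cap : α → ℕ) :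
    ∀ l : List α, l.Nodup → ∀ N : List β, N.length ≤ (l.map cap).sum →
      ∃ f : α → List β, (∀ a, (f a).length ≤ cap a) ∧ (l.map f).flatten = N
  | [], _, N, hN => ⟨fun _ => [], by simp, by simpa using hN⟩
  | a :: l, hl, N, hN => by
    rw [List.nodup_cons] at hl
    rw [List.map_cons, List.sum_cons] at hN
    obtain ⟨g, hg, hgN⟩ := exists_flatten_map_eq cap l hl.2 (N.drop (cap a)) (by simp; omega)
    refine ⟨Function.update g a (N.take (cap a)), fun b => ?_, ?_⟩
    · rcases eq_or_ne b a with rfl | hb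
      · simp
      · simpa [hb] using hg b
    · have hmap : l.map (Function.update g a (N.take (cap a))) = l.map g :=
        List.map_congr_left fun b hb => Function.update_of_ne (ne_of_mem_of_not_mem hb hl.1) _ _
      simp [hmap, hgN]

theorem Nat.lt_two_pow_min_log_add_one {k Δ : ℕ} (hk : k ≤ Δ) :
    k < 2 ^ min k (Nat.log 2 Δ + 1) := by
  rcases min_choice k (Nat.log 2 Δ + 1) with h | h <;> rw [h]
  · exact Nat.lt_two_pow_self
  · exact hk.trans_lt (Nat.lt_pow_succ_log_self one_lt_two Δ)

theorem Nat.clog_two_add_one_le {a b k m : ℕ} (hb : 1 ≤ b) (hk : k < 2 ^ m)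
    (hab : a ≤ 1 + k * b) : Nat.clog 2 (a + 1) ≤ Nat.clog 2 (b + 1) + m := by
  rw [Nat.clog_le_iff_le_pow one_lt_two, pow_add]
  have hb2 := Nat.le_pow_clog one_lt_two (b + 1)
  calc a + 1 ≤ (b + 1) * (k + 1) := by nlinarith
    _ ≤ 2 ^ Nat.clog 2 (b + 1) * 2 ^ m := Nat.mul_le_mul hb2 hk

theorem SimpleGraph.connected_induce_insert_union {V : Type*} {G : SimpleGraph V} {s t : Set V}
    {u v : V} (hs : (G.induce s).Connected) (hu : u ∈ s) (hvu : G.Adj v u)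
    (ht : ∀ w ∈ t, G.Adj v w) : (G.induce (insert v (s ∪ t))).Connected := by
  have hvs : (G.induce (insert v s)).Connected := by
    rw [← Set.singleton_union]
    refine G.connected_induce_union ?_ hs.preconnected (Set.mem_singleton v) hu hvu
    rw [G.induce_singleton_eq_top]
    exact SimpleGraph.connected_top.preconnected
  refine G.induce_connected_of_patches v (Set.mem_insert v _) fun {w} hw => ?_
  rcases hw with rfl | hw | hw
  · exact ⟨_, Set.insert_subset_insert Set.subset_union_left, Set.mem_insert w _,
      Set.mem_insert w _, hvs.preconnected _ _⟩
  · exact ⟨_, Set.insert_subset_insert Set.subset_union_left, Set.mem_insert v _,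
      Set.mem_insert_of_mem v hw, hvs.preconnected _ _⟩
  · exact ⟨{v, w}, Set.insert_subset_insert (Set.singleton_subset_iff.2 (Or.inr hw)),
      Set.mem_insert v _, Set.mem_insert_of_mem v rfl,
      (G.induce_pair_connected_of_adj (ht w hw)).preconnected _ _⟩

namespace SimpleGraph

variable {V : Type*} [Fintype V] (T : SimpleGraph V) (r : V)

open Classical in
noncomputable def children (v : V) : Finset V :=
  {u | T.Adj v u ∧ T.dist r u = T.dist r v + 1}

/-- `u` lies below `v` when some shortest path from the root `r` to `u` passes through `v`. -/
noncomputable def descendants (v : V) : Finset V :=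
  {u | T.dist r u = T.dist r v + T.dist v u}

variable {T r}

@[simp]
theorem mem_children {v u : V} :
    u ∈ children T r v ↔ T.Adj v u ∧ T.dist r u = T.dist r v + 1 := by
  simp [children]

@[simp]
theorem mem_descendants {v u : V} :
    u ∈ descendants T r v ↔ T.dist r u = T.dist r v + T.dist v u := by
  simp [descendants]

theorem self_mem_descendants (v : V) : v ∈ descendants T r v := by
  simp

theorem dist_le_of_mem_descendants {v u : V} (h : u ∈ descendants T r v) :
    T.dist r v ≤ T.dist r u := by
  rw [mem_descendants] at h; omega

theorem children_subset_descendants (v : V) : children T r v ⊆ descendants T r v := by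
  intro u hu
  rw [mem_children] at hu
  rw [mem_descendants, dist_eq_one_iff_adj.2 hu.1]
  exact hu.2

theorem descendants_subset_of_mem (hc : T.Connected) {v w : V} (h : w ∈ descendants T r v) :
    descendants T r w ⊆ descendants T r v := by
  intro x hx
  rw [mem_descendants] at h hx ⊢
  have := hc.dist_triangle (u := v) (v := w) (w := x)
  have := hc.dist_triangle (u := r) (v := v) (w := x)
  omega

theorem exists_mem_children_mem_descendants (hc : T.Connected) {v w : V}
    (h : w ∈ descendants T r v) (hne : w ≠ v) : ∃ u ∈ children T r v, w ∈ descendants T r u := by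
  obtain ⟨p, hp⟩ := hc.exists_walk_length_eq_dist v w
  rw [mem_descendants] at h
  cases p with
  | nil => exact absurd rfl hne
  | @cons _ u _ hvu q =>
    have hq : T.dist u w ≤ q.length := dist_le q
    have hvu1 : T.dist v u = 1 := dist_eq_one_iff_adj.2 hvu
    have := hc.dist_triangle (u := r) (v := u) (w := w)
    have := hc.dist_triangle (u := r) (v := v) (w := u)
    rw [Walk.length_cons] at hp
    exact ⟨u, mem_children.2 ⟨hvu, by omega⟩, mem_descendants.2 (by omega)⟩

theorem card_descendants_le (hc : T.Connected) (v : V) :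
    #(descendants T r v) ≤ 1 + ∑ u ∈ children T r v, #(descendants T r u) := by
  classical
  have hsub : descendants T r v ⊆ insert v ((children T r v).biUnion (descendants T r)) := by
    intro w hw
    rcases eq_or_ne w v with rfl | hne
    · exact mem_insert_self _ _
    · obtain ⟨u, hu, hwu⟩ := exists_mem_children_mem_descendants hc hw hne
      exact mem_insert_of_mem (mem_biUnion.2 ⟨u, hu, hwu⟩)
  calc #(descendants T r v) ≤ #(insert v ((children T r v).biUnion (descendants T r))) :=
        card_le_card hsub
    _ ≤ 1 + ∑ u ∈ children T r v, #(descendants T r u) := by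
        grw [card_insert_le, card_biUnion_le]; omega

theorem IsTree.eq_of_mem_descendants (hT : T.IsTree) {v u₁ u₂ w : V}
    (h₁ : u₁ ∈ children T r v) (h₂ : u₂ ∈ children T r v)
    (hw₁ : w ∈ descendants T r u₁) (hw₂ : w ∈ descendants T r u₂) : u₁ = u₂ := by
  have geodesic_through : ∀ u, u ∈ children T r v → w ∈ descendants T r u →
      ∃ p : T.Path v w, p.1.snd = u := by
    intro u hu hw
    rw [mem_children] at hu
    rw [mem_descendants] at hw
    obtain ⟨q, hq⟩ := hT.connected.exists_walk_length_eq_dist u w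
    have := hT.connected.dist_triangle (u := r) (v := v) (w := w)
    have := hT.connected.dist_triangle (u := v) (v := u) (w := w)
    have hvu1 : T.dist v u = 1 := dist_eq_one_iff_adj.2 hu.1
    refine ⟨⟨.cons hu.1 q, Walk.isPath_of_length_eq_dist _ ?_⟩, by simp⟩
    rw [Walk.length_cons, hq]
    omega
  obtain ⟨p₁, rfl⟩ := geodesic_through u₁ h₁ hw₁
  obtain ⟨p₂, rfl⟩ := geodesic_through u₂ h₂ hw₂
  rw [(hT.isAcyclic.subsingleton_path v w).elim p₁ p₂]

theorem card_children_le_of_ncard_neighborSet_le {Δ : ℕ}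
    (hdeg : ∀ v, (T.neighborSet v).ncard ≤ Δ) (v : V) : #(children T r v) ≤ Δ := by
  rw [← Set.ncard_coe_finset]
  exact (Set.ncard_le_ncard (fun u hu => (mem_children.1 hu).1) (Set.toFinite _)).trans (hdeg v)

variable [DecidableEq V]

theorem coe_children_inter (v : V) (S : Finset V) :
    (↑(children T r v ∩ S) : Set V) = {u | u ∈ S ∧ T.Adj v u ∧ T.dist r u = T.dist r v + 1} := by
  ext u
  simp only [Set.mem_ofPred_eq, coe_inter, Set.mem_inter_iff, mem_coe, mem_children]
  tauto

variable (T r) in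
structure IsPrunedSubtree (b : ℕ) (v : V) (S : Finset V) : Prop where
  mem : v ∈ S
  subset_descendants : S ⊆ descendants T r v
  connected : (T.induce (S : Set V)).Connected
  card_children_inter_le : ∀ w ∈ S, #(children T r w ∩ S) ≤ b

theorem isPrunedSubtree_singleton (b : ℕ) (v : V) : IsPrunedSubtree T r b v {v} where
  mem := mem_singleton_self v
  subset_descendants := singleton_subset_iff.2 (self_mem_descendants v)
  connected := by rw [coe_singleton, induce_singleton_eq_top]; exact connected_top
  card_children_inter_le w hw := by
    obtain rfl := mem_singleton.1 hw
    simp [mem_children]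

section InsertUnion

variable (hT : T.IsTree) {b : ℕ} {v u : V} {S E : Finset V}
  (hu : u ∈ children T r v) (hS : IsPrunedSubtree T r b u S) (hE : E ⊆ (children T r v).erase u)
include hT hu hS hE

theorem IsPrunedSubtree.card_insert_union : #(insert v (S ∪ E)) = #S + #E + 1 := by
  have hdist := (mem_children.1 hu).2
  have hv : v ∉ S ∪ E := by
    rw [mem_union]
    rintro (hvS | hvE)
    · have := dist_le_of_mem_descendants (hS.subset_descendants hvS); omega
    · exact T.loopless.irrefl v (mem_children.1 (mem_of_mem_erase (hE hvE))).1
  have hdisj : Disjoint S E := by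
    refine Finset.disjoint_left.2 fun x hxS hxE => ?_
    have hxu := ne_of_mem_erase (hE hxE)
    exact hxu (hT.eq_of_mem_descendants (mem_of_mem_erase (hE hxE)) hu
      (self_mem_descendants x) (hS.subset_descendants hxS))
  rw [card_insert_of_notMem hv, card_union_of_disjoint hdisj]

theorem IsPrunedSubtree.card_children_inter_insert_union_le (hEb : #E + 1 ≤ b) :
    ∀ w ∈ insert v (S ∪ E), #(children T r w ∩ insert v (S ∪ E)) ≤ b := by
  intro w hw
  have hE_children : ∀ x ∈ E, x ∈ children T r v := fun x hx => mem_of_mem_erase (hE hx)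
  have hdist_E : ∀ x ∈ E, T.dist r x = T.dist r v + 1 := fun x hx =>
    (mem_children.1 (hE_children x hx)).2
  rw [mem_insert, mem_union] at hw
  rcases hw with rfl | hw | hw
  · calc #(children T r w ∩ insert w (S ∪ E)) ≤ #(insert u E) := card_le_card ?_
      _ ≤ #E + 1 := card_insert_le u E
      _ ≤ b := hEb
    intro x hx
    rw [mem_inter, mem_insert, mem_union] at hx
    obtain ⟨hxc, rfl | hxS | hxE⟩ := hx
    · exact absurd (mem_children.1 hxc).1 (T.loopless.irrefl x)
    · rw [hT.eq_of_mem_descendants hxc hu (self_mem_descendants x) (hS.subset_descendants hxS)]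
      exact mem_insert_self u E
    · exact mem_insert_of_mem hxE
  · refine (card_le_card fun x hx => ?_).trans (hS.card_children_inter_le w hw)
    rw [mem_inter, mem_insert, mem_union] at hx
    have := (mem_children.1 hx.1).2
    have := (mem_children.1 hu).2
    have := dist_le_of_mem_descendants (hS.subset_descendants hw)
    obtain ⟨hxc, rfl | hxS | hxE⟩ := hx
    · omega
    · exact mem_inter.2 ⟨hxc, hxS⟩
    · have := hdist_E x hxE; omega
  · suffices children T r w ∩ insert v (S ∪ E) = ∅ by simp [this]
    refine eq_empty_of_forall_notMem fun x hx => ?_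
    rw [mem_inter, mem_insert, mem_union] at hx
    have := (mem_children.1 hx.1).2
    have := hdist_E w hw
    obtain ⟨hxc, rfl | hxS | hxE⟩ := hx
    · omega
    · exact ne_of_mem_erase (hE hw) (hT.eq_of_mem_descendants (hE_children w hw) hu
        (children_subset_descendants w hxc) (hS.subset_descendants hxS))
    · have := hdist_E x hxE; omega

theorem IsPrunedSubtree.insert_union (hEb : #E + 1 ≤ b) :
    IsPrunedSubtree T r b v (insert v (S ∪ E)) where
  mem := mem_insert_self v _
  subset_descendants := by
    have hSv := descendants_subset_of_mem hT.connected (children_subset_descendants v hu)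
    refine insert_subset (self_mem_descendants v) (union_subset (hS.subset_descendants.trans hSv)
      fun x hx => children_subset_descendants v (mem_of_mem_erase (hE hx)))
  connected := by
    rw [coe_insert, coe_union]
    exact connected_induce_insert_union hS.connected hS.mem (mem_children.1 hu).1
      fun w hw => (mem_children.1 (mem_of_mem_erase (hE hw))).1
  card_children_inter_le := hS.card_children_inter_insert_union_le hT hu hE hEb

end InsertUnion

theorem exists_isPrunedSubtree (hT : T.IsTree) {Δ : ℕ} (hΔ : ∀ w, #(children T r w) ≤ Δ)
    (v : V) : ∃ S, IsPrunedSubtree T r (Nat.log 2 Δ + 1) v S ∧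
      Nat.clog 2 (#(descendants T r v) + 1) ≤ #S := by
  induction hv : #(descendants T r v) using Nat.strong_induction_on generalizing v with
  | _ N ih =>
  subst hv
  have hdesc := card_descendants_le hT.connected (r := r) v
  rcases (children T r v).eq_empty_or_nonempty with hleaf | hne
  · refine ⟨{v}, isPrunedSubtree_singleton _ v, ?_⟩
    rw [hleaf, sum_empty] at hdesc
    rw [card_singleton, Nat.clog_le_iff_le_pow one_lt_two]
    omega
  obtain ⟨u, hu, hmax⟩ := exists_max_image (children T r v) (fun c => #(descendants T r c)) hne
  have hlt : #(descendants T r u) < #(descendants T r v) := by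
    refine card_lt_card ((ssubset_iff_of_subset (descendants_subset_of_mem hT.connected
      (children_subset_descendants v hu))).2 ⟨v, self_mem_descendants v, fun hv => ?_⟩)
    have := dist_le_of_mem_descendants hv
    have := (mem_children.1 hu).2
    omega
  obtain ⟨S, hS, hSc⟩ := ih _ hlt u rfl
  set m := min #(children T r v) (Nat.log 2 Δ + 1)
  have hm : 1 ≤ m := le_min (card_pos.2 hne) (Nat.le_add_left 1 _)
  obtain ⟨E, hE, hEc⟩ := exists_subset_card_eq (s := (children T r v).erase u) (n := m - 1)
    (by rw [card_erase_of_mem hu]; omega)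
  refine ⟨insert v (S ∪ E), hS.insert_union hT hu hE (by omega), ?_⟩
  have hsum : ∑ c ∈ children T r v, #(descendants T r c) ≤
      #(children T r v) * #(descendants T r u) := by
    simpa using sum_le_card_nsmul _ _ _ hmax
  rw [hS.card_insert_union hT hu hE, hEc]
  calc Nat.clog 2 (#(descendants T r v) + 1) ≤ Nat.clog 2 (#(descendants T r u) + 1) + m :=
        Nat.clog_two_add_one_le (card_pos.2 ⟨u, self_mem_descendants u⟩)
          (Nat.lt_two_pow_min_log_add_one (hΔ v)) (by omega)
    _ ≤ #S + (m - 1) + 1 := by omega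

end SimpleGraph

open SimpleGraph in
theorem stmt0_general {V : Type*} [Fintype V] [DecidableEq V]
    (T : SimpleGraph V) (hT : T.IsTree) (r : V) (n Δ : ℕ)
    (hn : Fintype.card V = n)
    (hdeg : ∀ v, (T.neighborSet v).ncard ≤ Δ)
    (M : List Bool) (hM : M.length = Nat.clog 2 (n + 1) + 1) :
    ∃ (S : Finset V) (f : V → List Bool) (l : List V),
      r ∈ S ∧
      (SimpleGraph.induce (S : Set V) T).Connected ∧
      (∀ v ∈ S,
        {u | u ∈ S ∧ T.Adj v u ∧ T.dist r u = T.dist r v + 1}.ncard ≤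
          Nat.log 2 Δ + 1) ∧
      (∀ v ∈ S, (f v).length ≤ 3) ∧
      (f r).length ≤ 2 ∧
      l.Nodup ∧ l.toFinset = S ∧ (l.map f).flatten = M := by
  obtain ⟨S, hS, hSc⟩ :=
    exists_isPrunedSubtree hT (r := r) (card_children_le_of_ncard_neighborSet_le hdeg) r
  have hdesc : descendants T r r = univ := by ext; simp
  rw [hdesc, card_univ, hn] at hSc
  set l' := (S.erase r).toList
  have hl' : r ∉ l' := by simp [l']
  have hl : (r :: l').Nodup := List.nodup_cons.2 ⟨hl', nodup_toList _⟩
  let cap : V → ℕ := fun v => if v = r then 2 else 3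
  have hcap : ((r :: l').map cap).sum = 2 + 3 * (#S - 1) := by
    rw [List.map_cons,
      List.map_congr_left (g := fun _ => 3) fun v hv => if_neg (ne_of_mem_of_not_mem hv hl')]
    simp [cap, l', card_erase_of_mem hS.mem, mul_comm]
  obtain ⟨f, hf, hfM⟩ := List.exists_flatten_map_eq cap (r :: l') hl M (by
    have := card_pos.2 ⟨r, hS.mem⟩; omega)
  refine ⟨S, f, r :: l', hS.mem, hS.connected, fun v hv => ?_, fun v _ => (hf v).trans ?_,
    by simpa [cap] using hf r, hl, by simp [l', insert_erase hS.mem], hfM⟩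
  · rw [← coe_children_inter, Set.ncard_coe_finset]
    exact hS.card_children_inter_le v hv
  · simp only [cap]; split <;> omega

/-- tree-storage lemma: in a rooted tree `T` with `n` nodes and maximum
degree `Δ ≥ 2`, any binary string `M` of length `⌈log₂(n+1)⌉ + 1` can be distributed,
in some traversal order, into strings of length ≤ 3 (≤ 2 at the root) assigned to the
nodes of a subtree `T'` containing the root in which every node has at most
`⌊log₂ Δ⌋ + 1` children. -/
theorem stmt0 {V : Type*} [Fintype V] [DecidableEq V]
    (T : SimpleGraph V) (hT : T.IsTree) (r : V) (n Δ : ℕ)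
    (hn : Fintype.card V = n) (hΔ : 2 ≤ Δ)
    (hdeg : ∀ v, (T.neighborSet v).ncard ≤ Δ)
    (M : List Bool) (hM : M.length = Nat.clog 2 (n + 1) + 1) :
    ∃ (S : Finset V) (f : V → List Bool) (l : List V),
      r ∈ S ∧
      (SimpleGraph.induce (S : Set V) T).Connected ∧
      (∀ v ∈ S,
        {u | u ∈ S ∧ T.Adj v u ∧ T.dist r u = T.dist r v + 1}.ncard ≤
          Nat.log 2 Δ + 1) ∧
      (∀ v ∈ S, (f v).length ≤ 3) ∧
      (f r).length ≤ 2 ∧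
      l.Nodup ∧ l.toFinset = S ∧ (l.map f).flatten = M :=
  stmt0_general T hT r n Δ hn hdeg M hM
end

section
/- Let G be a graph with source s, layers V_i the sets of vertices at distance i from s, and fix a stripe consisting of layers a, a+1, …, b. Call a path u₀, u₁, …, u_{b−a} with u_t ∈ V_{a+t} a BFS-path of the stripe. Let U ⊆ V_a be a minimal set such that every vertex of V_b is the endpoint of a BFS-path starting in U (a minimal BFS-cover). Then for each u ∈ U there is a BFS-path P_u from u ending in V_b such that the family {P_u : u ∈ U} is conflict-free: for distinct u, u' ∈ U there is no edge of G joining a vertex of P_u to a vertex of P_{u'} lying in different layers. -/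
/-- A BFS-path of the stripe of layers `a, a+1, …, b` (layers measured as distance from
the source `s`): `p t` lies in layer `a + t` and consecutive vertices are adjacent. -/
def IsBFSPath {V : Type*} (G : SimpleGraph V) (s : V) (a b : ℕ) (p : ℕ → V) : Prop :=
  (∀ t, t ≤ b - a → G.dist s (p t) = a + t) ∧
  (∀ t, t < b - a → G.Adj (p t) (p (t + 1)))

/-- `v` (in layer `b`) is reachable from `u` (in layer `a`) by a BFS-path of the stripe. -/
def BFSReach {V : Type*} (G : SimpleGraph V) (s : V) (a b : ℕ) (u v : V) : Prop :=
  ∃ p : ℕ → V, IsBFSPath G s a b p ∧ p 0 = u ∧ p (b - a) = v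

/-- `U` is a BFS-cover of the stripe: a set of vertices of layer `a` from which every
vertex of layer `b` is BFS-reachable. -/
def IsBFSCover {V : Type*} (G : SimpleGraph V) (s : V) (a b : ℕ) (U : Finset V) : Prop :=
  (∀ u ∈ U, G.dist s u = a) ∧
  (∀ v, G.dist s v = b → ∃ u ∈ U, BFSReach G s a b u v)

/-- Adjacent vertices have distances from `s` differing by at most one
(when the first is reachable from `s`). -/
lemma adj_dist_le {V : Type*} {G : SimpleGraph V} {s x y : V}
    (h : G.Adj x y) (hx : G.Reachable s x) : G.dist s y ≤ G.dist s x + 1 := by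
  have h1 : G.edist s y ≤ G.edist s x + 1 := by
    calc G.edist s y ≤ G.edist s x + G.edist x y := SimpleGraph.edist_triangle
    _ = G.edist s x + 1 := by rw [SimpleGraph.edist_eq_one_iff_adj.2 h]
  have hx' : G.edist s x ≠ ⊤ := SimpleGraph.edist_ne_top_iff_reachable.2 hx
  have h2 : G.edist s x + 1 ≠ ⊤ := WithTop.add_ne_top.mpr ⟨hx', ENat.one_ne_top⟩
  have h3 := ENat.toNat_le_toNat h1 h2
  rw [ENat.toNat_add hx' ENat.one_ne_top] at h3
  simpa [SimpleGraph.dist] using h3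

/-- Crossing construction: if `p`, `q` are BFS-paths of the stripe and there is an edge
from `p t` to `q (t+1)` within the stripe, then the endpoint of `q` is BFS-reachable
from the start of `p`. -/
lemma cross {V : Type*} {G : SimpleGraph V} {s : V} {a b : ℕ} {p q : ℕ → V}
    (hp : IsBFSPath G s a b p) (hq : IsBFSPath G s a b q) {t : ℕ}
    (ht : t + 1 ≤ b - a) (hadj : G.Adj (p t) (q (t + 1))) :
    BFSReach G s a b (p 0) (q (b - a)) := by
  refine ⟨fun i => if i ≤ t then p i else q i, ⟨?_, ?_⟩, by simp, ?_⟩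
  · intro i hi
    by_cases h : i ≤ t <;> simp only [h, if_true, if_false]
    · exact hp.1 i hi
    · exact hq.1 i hi
  · intro i hi
    rcases lt_trichotomy i t with h | h | h
    · have h1 : i + 1 ≤ t := h
      simp only [h.le, h1, if_true]
      exact hp.2 i (lt_of_lt_of_le (Nat.lt_of_lt_of_le h (Nat.le_of_succ_le ht)) le_rfl)
    · subst h
      simp only [le_refl, if_true, Nat.not_succ_le_self, if_false]
      exact hadj
    · have h1 : ¬ i ≤ t := not_le.mpr h
      have h2 : ¬ i + 1 ≤ t := fun hc => h1 (Nat.le_of_succ_le hc)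
      simp only [h1, h2, if_false]
      exact hq.2 i hi
  · have : ¬ b - a ≤ t := fun hc => by omega
    simp [this]

/-- for a minimal BFS-cover `U` of the stripe `[a, b]`, one can choose for
each `u ∈ U` a BFS-path `P u` from `u` ending in layer `b` so that the family of paths is
conflict-free: no edge of `G` joins vertices of two distinct paths lying in different
layers. -/
theorem stmt5 {V : Type*} (G : SimpleGraph V) (s : V) (a b : ℕ) (hab : a ≤ b)
    (U : Finset V) (hU : IsBFSCover G s a b U)
    (hmin : ∀ U' : Finset V, U' ⊂ U → ¬ IsBFSCover G s a b U') :
    ∃ P : V → ℕ → V, ∀ u ∈ U,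
      (IsBFSPath G s a b (P u) ∧ P u 0 = u ∧ G.dist s (P u (b - a)) = b) ∧
      (∀ u' ∈ U, u' ≠ u → ∀ t t' : ℕ, t ≤ b - a → t' ≤ b - a → t ≠ t' →
        ¬ G.Adj (P u t) (P u' t')) := by
  classical
  -- For each u ∈ U there is a BFS-path p from u whose endpoint is not BFS-reachable
  -- from any other member of U.
  have key : ∀ u ∈ U, ∃ p : ℕ → V, IsBFSPath G s a b p ∧ p 0 = u ∧
      (∀ u' ∈ U, u' ≠ u → ¬ BFSReach G s a b u' (p (b - a))) := by
    intro u hu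
    have hsub : U.erase u ⊂ U := Finset.erase_ssubset hu
    have hnc := hmin _ hsub
    rw [IsBFSCover] at hnc
    push_neg at hnc
    have hfirst : ∀ x ∈ U.erase u, G.dist s x = a := fun x hx =>
      hU.1 x (Finset.mem_of_mem_erase hx)
    obtain ⟨v, hv, hvnot⟩ := hnc hfirst
    obtain ⟨u₀, hu₀, p, hp, hp0, hpend⟩ := hU.2 v hv
    have hu₀u : u₀ = u := by
      by_contra hne
      exact hvnot u₀ (Finset.mem_erase.mpr ⟨hne, hu₀⟩) ⟨p, hp, hp0, hpend⟩
    subst hu₀u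
    refine ⟨p, hp, hp0, ?_⟩
    intro u' hu' hne hr
    rw [hpend] at hr
    exact hvnot u' (Finset.mem_erase.mpr ⟨hne, hu'⟩) hr
  choose! P hP1 hP2 hP3 using key
  refine ⟨P, fun u hu => ⟨⟨hP1 u hu, hP2 u hu, ?_⟩, ?_⟩⟩
  · have := (hP1 u hu).1 (b - a) le_rfl
    omega
  · intro u' hu' hne t t' ht ht' htt hadj
    -- both vertices lie in their layers
    have hdx : G.dist s (P u t) = a + t := (hP1 u hu).1 t ht
    have hdy : G.dist s (P u' t') = a + t' := (hP1 u' hu').1 t' ht'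
    -- establish reachability of both from s
    have hreach : G.Reachable s (P u t) ∧ G.Reachable s (P u' t') := by
      by_cases hx : G.Reachable s (P u t)
      · refine ⟨hx, ?_⟩
        exact hx.trans hadj.reachable
      · exfalso
        have h0 : G.dist s (P u t) = 0 := SimpleGraph.dist_eq_zero_of_not_reachable hx
        have ha0 : a + t = 0 := by omega
        have ht'pos : 0 < a + t' := by omega
        have hy : G.Reachable s (P u' t') := by
          apply SimpleGraph.Reachable.of_dist_ne_zero
          omega
        exact hx (hy.trans hadj.symm.reachable)
    have h1 : a + t' ≤ a + t + 1 := by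
      have := adj_dist_le hadj hreach.1
      omega
    have h2 : a + t ≤ a + t' + 1 := by
      have := adj_dist_le hadj.symm hreach.2
      omega
    -- so t' = t + 1 or t = t' + 1
    rcases (by omega : t' = t + 1 ∨ t = t' + 1) with h | h
    · subst h
      have hr : BFSReach G s a b (P u 0) (P u' (b - a)) :=
        cross (hP1 u hu) (hP1 u' hu') ht' hadj
      rw [hP2 u hu] at hr
      exact hP3 u' hu' u hu (Ne.symm hne) hr
    · subst h
      have hr : BFSReach G s a b (P u' 0) (P u (b - a)) :=
        cross (hP1 u' hu') (hP1 u hu) ht hadj.symm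
      rw [hP2 u' hu'] at hr
      exact hP3 u hu u' hu' hne hr
end

section
/- Let G = (V, E) be a graph with maximum degree at most Δ, let s ∈ V, and let V_i be the set of vertices at distance i from s. Fix a layer i and suppose sets X₀, …, X_{j−1} ⊆ V_i have been chosen. Define Z_j(v) = N_{i+1}(v) \ ⋃_{k<j} ⋃_{x ∈ X_k} N_{i+1}(x), where N_{i+1}(v) is the set of neighbors of v in V_{i+1}. If each X_k is a maximal subset of V_i \ (X₀ ∪ ⋯ ∪ X_{k−1}) whose members have pairwise disjoint sets Z_k, then for every v ∈ V_i \ (X₀ ∪ ⋯ ∪ X_{j−1}) we have |Z_j(v)| ≤ Δ − j. Consequently X₀ ∪ X₁ ∪ ⋯ ∪ X_Δ = V_i. -/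
/-- The neighbors of `v` lying in layer `i + 1` (distance `i + 1` from `s`). -/
def upNbr {V : Type*} (G : SimpleGraph V) (s : V) (i : ℕ) (v : V) : Set V :=
  {u | G.Adj v u ∧ G.dist s u = i + 1}

/-- `Z_j(v)`: the up-neighbors of `v` not already covered by the up-neighborhoods of the
members of `X₀, …, X_{j-1}`. -/
def Zset {V : Type*} (G : SimpleGraph V) (s : V) (i : ℕ) (X : ℕ → Finset V)
    (j : ℕ) (v : V) : Set V :=
  upNbr G s i v \ ⋃ (k : ℕ) (_ : k < j), ⋃ x ∈ (X k : Set V), upNbr G s i x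

/-!
Each round of the greedy construction costs a vertex `v` that is still unchosen at least one
vertex of `Z_j(v)`: by maximality of `X_j`, `Z_j(v)` meets `Z_j(x)` for some `x ∈ X_j`, and the
shared vertex is an up-neighbour of `x`, hence is excluded from `Z_{j+1}(v)`. Starting from
`|Z_0(v)| ≤ Δ`, we get `|Z_j(v)| ≤ Δ - j`. A vertex unchosen after rounds `0, …, Δ` would have
`Z_Δ(v) = ∅`, which cannot meet any `Z_Δ(x)`, contradicting the maximality of `X_Δ`.
-/

namespace Zset

variable {V : Type*} (G : SimpleGraph V) (s : V) (i : ℕ) (X : ℕ → Finset V)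

theorem subset_neighborSet (j : ℕ) (v : V) : Zset G s i X j v ⊆ G.neighborSet v :=
  fun _ hu => hu.1.1

theorem succ_eq (j : ℕ) (v : V) :
    Zset G s i X (j + 1) v = Zset G s i X j v \ ⋃ x ∈ (X j : Set V), upNbr G s i x := by
  ext u
  simp only [Zset, Set.mem_sdiff, Set.mem_iUnion, Nat.lt_succ_iff_lt_or_eq, exists_prop]
  constructor
  · rintro ⟨hu, hnot⟩
    exact ⟨⟨hu, fun ⟨k, hk, hx⟩ => hnot ⟨k, Or.inl hk, hx⟩⟩, fun hx => hnot ⟨j, Or.inr rfl, hx⟩⟩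
  · rintro ⟨⟨hu, hnot⟩, hnot'⟩
    refine ⟨hu, ?_⟩
    rintro ⟨k, hk | rfl, hx⟩
    exacts [hnot ⟨k, hk, hx⟩, hnot' hx]

theorem ncard_succ_lt [Finite V] {j : ℕ} {v x : V} (hx : x ∈ X j)
    (hmeet : (Zset G s i X j v ∩ Zset G s i X j x).Nonempty) :
    (Zset G s i X (j + 1) v).ncard < (Zset G s i X j v).ncard := by
  obtain ⟨w, hwv, hwx⟩ := hmeet
  refine Set.ncard_lt_ncard ?_ (Set.toFinite _)
  rw [succ_eq]
  refine Set.ssubset_iff_exists.mpr ⟨Set.sdiff_subset, w, hwv, fun hw => hw.2 ?_⟩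
  exact Set.mem_biUnion hx hwx.1

variable [Finite V] {Δ : ℕ} (hdeg : ∀ v, (G.neighborSet v).ncard ≤ Δ)
  (hmax : ∀ k, k ≤ Δ → ∀ v, G.dist s v = i → (∀ k', k' ≤ k → v ∉ X k') →
    ∃ x ∈ X k, (Zset G s i X k v ∩ Zset G s i X k x).Nonempty)
include hdeg hmax

theorem ncard_le_sub {j : ℕ} (hj : j ≤ Δ) {v : V} (hv : G.dist s v = i)
    (hfree : ∀ k, k < j → v ∉ X k) : (Zset G s i X j v).ncard ≤ Δ - j := by
  induction j with
  | zero =>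
    exact (Set.ncard_le_ncard (subset_neighborSet G s i X 0 v)).trans (hdeg v)
  | succ j ih =>
    obtain ⟨x, hx, hmeet⟩ := hmax j (by omega) v hv fun k hk => hfree k (by omega)
    have hlt := ncard_succ_lt G s i X hx hmeet
    have hle := ih (by omega) fun k hk => hfree k (by omega)
    omega

theorem exists_mem_of_dist_eq {v : V} (hv : G.dist s v = i) : ∃ k, k ≤ Δ ∧ v ∈ X k := by
  by_contra! hfree
  have hempty : Zset G s i X Δ v = ∅ := by
    have := ncard_le_sub G s i X hdeg hmax le_rfl hv fun k hk => hfree k hk.le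
    rwa [Nat.sub_self, Nat.le_zero, Set.ncard_eq_zero] at this
  obtain ⟨x, -, hmeet⟩ := hmax Δ le_rfl v hv hfree
  simp [hempty] at hmeet

end Zset

theorem stmt11_general {V : Type*} [Fintype V] (G : SimpleGraph V) (s : V) (i Δ : ℕ)
    (X : ℕ → Finset V)
    (hdeg : ∀ v, (G.neighborSet v).ncard ≤ Δ)
    (hmax : ∀ k, k ≤ Δ → ∀ v, G.dist s v = i → (∀ k', k' ≤ k → v ∉ X k') →
      ∃ x ∈ X k, (Zset G s i X k v ∩ Zset G s i X k x).Nonempty) :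
    (∀ j, j ≤ Δ → ∀ v, G.dist s v = i → (∀ k, k < j → v ∉ X k) →
      (Zset G s i X j v).ncard ≤ Δ - j) ∧
    (∀ v, G.dist s v = i → ∃ k, k ≤ Δ ∧ v ∈ X k) :=
  ⟨fun _ hj _ hv hfree => Zset.ncard_le_sub G s i X hdeg hmax hj hv hfree,
    fun _ hv => Zset.exists_mem_of_dist_eq G s i X hdeg hmax hv⟩

/-- for the greedy layered decomposition `X₀, X₁, …` of layer `i`
(each `X_k` a maximal subset of the remaining vertices of layer `i` whose `Z_k`-sets are
pairwise disjoint) in a graph of maximum degree ≤ `Δ`, every vertex of layer `i` not in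
`X₀ ∪ ⋯ ∪ X_{j-1}` satisfies `|Z_j(v)| ≤ Δ − j`; consequently `X₀ ∪ ⋯ ∪ X_Δ` covers
layer `i`. -/
theorem stmt11 {V : Type*} [Fintype V] (G : SimpleGraph V) (s : V) (i Δ : ℕ)
    (X : ℕ → Finset V)
    (hdeg : ∀ v, (G.neighborSet v).ncard ≤ Δ)
    (hmem : ∀ k, k ≤ Δ → ∀ v ∈ X k, G.dist s v = i ∧ ∀ k', k' < k → v ∉ X k')
    (hdisj : ∀ k, k ≤ Δ → ∀ u ∈ X k, ∀ v ∈ X k, u ≠ v →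
      Zset G s i X k u ∩ Zset G s i X k v = ∅)
    (hmax : ∀ k, k ≤ Δ → ∀ v, G.dist s v = i → (∀ k', k' ≤ k → v ∉ X k') →
      ∃ x ∈ X k, (Zset G s i X k v ∩ Zset G s i X k x).Nonempty) :
    (∀ j, j ≤ Δ → ∀ v, G.dist s v = i → (∀ k, k < j → v ∉ X k) →
      (Zset G s i X j v).ncard ≤ Δ - j) ∧
    (∀ v, G.dist s v = i → ∃ k, k ≤ Δ ∧ v ∈ X k) :=
  stmt11_general G s i Δ X hdeg hmax
end

section
/- Let G be a graph of maximum degree at most Δ with a BFS tree T rooted at s (each non-root vertex has a parent in the previous layer). Suppose each vertex v is assigned an integer g_v ∈ [0, Δ−1] such that (i) distinct children of the same parent get distinct values, and (ii) whenever u and v are distinct vertices in the same layer with g_u = g_v and different parents, u is not adjacent in G to parent(v). Then for every layer i and every value g ∈ [0, Δ−1], if all vertices v in layer i with g_v = g transmit simultaneously, each parent of such a vertex hears exactly one transmitting neighbor. -/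
/-- in a BFS tree with gather-labels `g_v ∈ [0, Δ−1]` such that (i)
distinct children of the same parent get distinct values and (ii) vertices of the same
layer with equal values and different parents are not adjacent to each other's parents,
if all vertices of a layer `i` with a given gather-label transmit simultaneously, then
the set of transmitting neighbors of the parent of any such vertex `v` is exactly `{v}`. -/
theorem stmt12 {V : Type*} (G : SimpleGraph V) (hc : G.Connected) (s : V) (Δ : ℕ)
    (parent : V → V)
    (hpar : ∀ v, v ≠ s → G.Adj v (parent v) ∧ G.dist s (parent v) + 1 = G.dist s v)
    (g : V → ℕ) (hg : ∀ v, g v < Δ)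
    (h1 : ∀ u v : V, u ≠ s → v ≠ s → u ≠ v → parent u = parent v → g u ≠ g v)
    (h2 : ∀ u v : V, u ≠ s → v ≠ s → u ≠ v → G.dist s u = G.dist s v → g u = g v →
      parent u ≠ parent v → ¬ G.Adj u (parent v)) :
    ∀ (i : ℕ) (v : V), v ≠ s → G.dist s v = i →
      ∀ u : V, (G.Adj (parent v) u ∧ G.dist s u = i ∧ g u = g v) ↔ u = v := by
  intro i v hv hvi u
  constructor
  · rintro ⟨hadj, hui, hgu⟩
    have hus : u ≠ s := by
      rintro rfl
      have h0 : G.dist u u = 0 := SimpleGraph.dist_self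
      rw [h0] at hui
      have : G.dist u v = 0 := by omega
      exact hv ((hc.dist_eq_zero_iff.mp this)).symm
    by_contra huv
    by_cases hp : parent u = parent v
    · exact h1 u v hus hv huv hp (by rw [hgu])
    · exact h2 u v hus hv huv (hui.trans hvi.symm) hgu hp hadj.symm
  · rintro rfl
    exact ⟨(hpar u hv).1.symm, hvi, rfl⟩
end

section
/- Suppose √n is an even natural number with n > 8⁴. Any deterministic topology recognition algorithm in the radio model with collision detection, executed on the graph G_n (√n components of size √n, half-graphs inside components, complete bipartite connections between components), requires a labeling scheme assigning more than n^{1/4} distinct labels. -/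
attribute [local instance] Classical.propDecidable

/-- Events observed by a node in one round of the radio model **with collision
detection**: a received message, "no message" (own transmission or a collision),
or silence. -/
inductive Event15
  | msg : List Bool → Event15
  | noMsg : Event15
  | silence : Event15

/-- The communication history of each node after `t` rounds of the deterministic
algorithm `step` (mapping a node's label and current history to `some m` = "transmit
`m`" or `none` = "listen") executed on graph `G` with labeling `L`, in the radio model
with collision detection: a transmitting node appends `noMsg`; a listening node appends
`msg m` if exactly one neighbor transmits (with message `m`), `noMsg` if at least two
neighbors transmit (a collision), and `silence` if no neighbor transmits. -/
noncomputable def hist15 {V : Type*} (G : SimpleGraph V) (L : V → List Bool)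
    (step : List Bool → List Event15 → Option (List Bool)) :
    ℕ → V → List Event15
  | 0, _ => []
  | t + 1, v =>
    let H : V → List Event15 := hist15 G L step t
    let tx : V → Prop := fun u => (step (L u) (H u)).isSome
    let ev : Event15 :=
      if tx v then Event15.noMsg
      else if h : ∃! u, G.Adj v u ∧ tx u then
        Event15.msg ((step (L h.exists.choose) (H h.exists.choose)).getD [])
      else if ∃ u, G.Adj v u ∧ tx u then Event15.noMsg
      else Event15.silence
    H v ++ [ev]

/-- Adjacency inside a component: the half-graph relation on `Fin m ⊕ Fin m`,
where `a_j` (left) is adjacent to `b_t` (right) iff `t ≤ j` (0-indexed). -/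
def halfAdj (m : ℕ) (x y : Fin m ⊕ Fin m) : Prop :=
  (∃ j t : Fin m, x = Sum.inl j ∧ y = Sum.inr t ∧ (t : ℕ) ≤ (j : ℕ)) ∨
  (∃ j t : Fin m, x = Sum.inr t ∧ y = Sum.inl j ∧ (t : ℕ) ≤ (j : ℕ))

/-- The lower-bound graph `G_n` with `s = √n`: `s` components, each on `s` vertices,
all inter-component pairs adjacent, half-graphs inside components. -/
def Gn (s : ℕ) : SimpleGraph (Fin s × (Fin (s / 2) ⊕ Fin (s / 2))) where
  Adj x y := x ≠ y ∧ (x.1 ≠ y.1 ∨ halfAdj (s / 2) x.2 y.2)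
  symm := ⟨by
    rintro x y ⟨hne, h | h⟩
    · exact ⟨hne.symm, Or.inl h.symm⟩
    · refine ⟨hne.symm, Or.inr ?_⟩
      rcases h with ⟨j, t, h1, h2, h3⟩ | ⟨j, t, h1, h2, h3⟩
      · exact Or.inr ⟨j, t, h2, h1, h3⟩
      · exact Or.inl ⟨j, t, h2, h1, h3⟩⟩
  loopless := ⟨fun x h => h.1 rfl⟩

/-!
Call a component *touched* once one of its nodes has transmitted while the component was
untouched. A node of an untouched component is adjacent to every node outside its component, so
when no node of its component transmits, what it hears depends only on the global set of
transmitters; hence untouched nodes with equal labels keep equal histories. In a round where more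
than two untouched components contain transmitters, every node hears a collision. Otherwise these
(at most two) components become touched, and the labels of their transmitters can never again
occur in an untouched component, since such a node would have transmitted as well. So at most
twice as many components as there are labels ever get touched. With fewer than `√n / 2` labels
some component stays untouched; its nodes `a_j` have pairwise distinct degrees, so correct
outputs force pairwise distinct labels on them. Hence there are at least `√n / 2 > n^{1/4}`
labels.
-/

section RadioModel

variable {V : Type*} (G : SimpleGraph V) (L : V → List Bool)
  (step : List Bool → List Event15 → Option (List Bool))

abbrev Transmits (t : ℕ) (u : V) : Prop := (step (L u) (hist15 G L step t u)).isSome = true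

noncomputable def listenEvent (t : ℕ) (x : V) : Event15 :=
  if h : ∃! u, G.Adj x u ∧ Transmits G L step t u then
    Event15.msg ((step (L h.exists.choose) (hist15 G L step t h.exists.choose)).getD [])
  else if ∃ u, G.Adj x u ∧ Transmits G L step t u then Event15.noMsg
  else Event15.silence

theorem hist15_succ (t : ℕ) (v : V) :
    hist15 G L step (t + 1) v = hist15 G L step t v ++
      [if Transmits G L step t v then Event15.noMsg else listenEvent G L step t v] :=
  rfl

variable {G L step}

theorem hist15_succ_eq_of_eq {t : ℕ} {v w : V} (hL : L v = L w)
    (hH : hist15 G L step t v = hist15 G L step t w)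
    (hlisten : listenEvent G L step t v = listenEvent G L step t w) :
    hist15 G L step (t + 1) v = hist15 G L step (t + 1) w := by
  rw [hist15_succ, hist15_succ, hlisten]
  unfold Transmits
  rw [hL, hH]

theorem listenEvent_eq_noMsg {t : ℕ} {x u₁ u₂ : V} (h₁ : G.Adj x u₁) (h₂ : G.Adj x u₂)
    (hne : u₁ ≠ u₂) (ht₁ : Transmits G L step t u₁) (ht₂ : Transmits G L step t u₂) :
    listenEvent G L step t x = Event15.noMsg := by
  rw [listenEvent, dif_neg, if_pos ⟨u₁, h₁, ht₁⟩]
  rintro ⟨u, -, huniq⟩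
  exact hne ((huniq u₁ ⟨h₁, ht₁⟩).trans (huniq u₂ ⟨h₂, ht₂⟩).symm)

theorem listenEvent_eq_of_forall_transmits_adj {t : ℕ} {x y : V}
    (hx : ∀ u, Transmits G L step t u → G.Adj x u)
    (hy : ∀ u, Transmits G L step t u → G.Adj y u) :
    listenEvent G L step t x = listenEvent G L step t y := by
  have hx' : ∀ u, G.Adj x u ∧ Transmits G L step t u ↔ Transmits G L step t u :=
    fun u => and_iff_right_of_imp (hx u)
  have hy' : ∀ u, G.Adj y u ∧ Transmits G L step t u ↔ Transmits G L step t u :=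
    fun u => and_iff_right_of_imp (hy u)
  simp only [listenEvent, hx', hy']

end RadioModel

section Join

variable {V ι : Type*} [Fintype V] (G : SimpleGraph V) (L : V → List Bool)
  (step : List Bool → List Event15 → Option (List Bool)) (comp : V → ι)

noncomputable def freshTransmitters (t : ℕ) (S : Finset ι) : Finset V :=
  Finset.univ.filter fun u => Transmits G L step t u ∧ comp u ∉ S

structure HistoryInvariant (t : ℕ) (S : Finset ι) (D : Finset (List Bool)) : Prop where
  subset_labels : D ⊆ Finset.univ.image L
  card_le : S.card ≤ 2 * D.card
  label_notMem : ∀ v, comp v ∉ S → L v ∉ D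
  hist15_eq : ∀ v w, comp v ∉ S → comp w ∉ S → L v = L w →
    hist15 G L step t v = hist15 G L step t w

variable {G L step comp}

theorem mem_freshTransmitters {t : ℕ} {S : Finset ι} {u : V} :
    u ∈ freshTransmitters G L step comp t S ↔ Transmits G L step t u ∧ comp u ∉ S := by
  simp [freshTransmitters]

theorem adj_of_transmits_of_notMem (hcomp : ∀ x y, comp x ≠ comp y → G.Adj x y)
    {t : ℕ} {S : Finset ι} {x : V} (hxS : comp x ∉ S)
    (hxF : comp x ∉ (freshTransmitters G L step comp t S).image comp)
    (u : V) (hu : Transmits G L step t u) : G.Adj x u :=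
  hcomp x u fun h =>
    hxF (Finset.mem_image.mpr ⟨u, mem_freshTransmitters.mpr ⟨hu, h ▸ hxS⟩, h.symm⟩)

theorem listenEvent_eq_noMsg_of_two_lt_card (hcomp : ∀ x y, comp x ≠ comp y → G.Adj x y)
    {t : ℕ} {S : Finset ι} (hF : 2 < ((freshTransmitters G L step comp t S).image comp).card)
    (x : V) : listenEvent G L step t x = Event15.noMsg := by
  have h_two : 1 < (((freshTransmitters G L step comp t S).image comp).erase (comp x)).card := by
    have := Finset.pred_card_le_card_erase
      (s := (freshTransmitters G L step comp t S).image comp) (a := comp x)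
    omega
  obtain ⟨c₁, hc₁, c₂, hc₂, hne⟩ := Finset.one_lt_card.mp h_two
  obtain ⟨hc₁x, hc₁F⟩ := Finset.mem_erase.mp hc₁
  obtain ⟨hc₂x, hc₂F⟩ := Finset.mem_erase.mp hc₂
  obtain ⟨u₁, hu₁, rfl⟩ := Finset.mem_image.mp hc₁F
  obtain ⟨u₂, hu₂, rfl⟩ := Finset.mem_image.mp hc₂F
  exact listenEvent_eq_noMsg (hcomp x u₁ hc₁x.symm) (hcomp x u₂ hc₂x.symm)
    (fun h => hne (congrArg comp h)) (mem_freshTransmitters.mp hu₁).1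
    (mem_freshTransmitters.mp hu₂).1

namespace HistoryInvariant

variable {t : ℕ} {S : Finset ι} {D : Finset (List Bool)}

theorem card_le_card_labels (hI : HistoryInvariant G L step comp t S D) :
    S.card ≤ 2 * (Finset.univ.image L).card :=
  hI.card_le.trans (Nat.mul_le_mul_left 2 (Finset.card_le_card hI.subset_labels))

theorem succ_of_collision (hcomp : ∀ x y, comp x ≠ comp y → G.Adj x y)
    (hI : HistoryInvariant G L step comp t S D)
    (hF : 2 < ((freshTransmitters G L step comp t S).image comp).card) :
    HistoryInvariant G L step comp (t + 1) S D where
  subset_labels := hI.subset_labels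
  card_le := hI.card_le
  label_notMem := hI.label_notMem
  hist15_eq v w hv hw hL := hist15_succ_eq_of_eq hL (hI.hist15_eq v w hv hw hL) <| by
    rw [listenEvent_eq_noMsg_of_two_lt_card hcomp hF, listenEvent_eq_noMsg_of_two_lt_card hcomp hF]

theorem succ_of_card_le_two (hcomp : ∀ x y, comp x ≠ comp y → G.Adj x y)
    (hI : HistoryInvariant G L step comp t S D)
    (hF : ((freshTransmitters G L step comp t S).image comp).card ≤ 2) :
    HistoryInvariant G L step comp (t + 1)
      (S ∪ (freshTransmitters G L step comp t S).image comp)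
      (D ∪ (freshTransmitters G L step comp t S).image L) := by
  set F := freshTransmitters G L step comp t S
  have hFS : ∀ u ∈ F, comp u ∉ S := fun u hu => (mem_freshTransmitters.mp hu).2
  have hdisj : Disjoint D (F.image L) := by
    refine Finset.disjoint_right.mpr fun l hl hlD => ?_
    obtain ⟨u, hu, rfl⟩ := Finset.mem_image.mp hl
    exact hI.label_notMem u (hFS u hu) hlD
  have hcardF : (F.image comp).card ≤ 2 * (F.image L).card := by
    rcases F.eq_empty_or_nonempty with hF0 | hF0
    · simp [hF0]
    · have := (hF0.image L).card_pos
      omega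
  refine ⟨Finset.union_subset hI.subset_labels (Finset.image_subset_image (Finset.subset_univ F)),
    ?_, fun v hv hvD => ?_, fun v w hv hw hL => ?_⟩
  · rw [Finset.card_union_of_disjoint hdisj]
    have := Finset.card_union_le S (F.image comp)
    have := hI.card_le
    omega
  · rw [Finset.mem_union, not_or] at hv
    rcases Finset.mem_union.mp hvD with hvD | hvF
    · exact hI.label_notMem v hv.1 hvD
    · obtain ⟨u, hu, hLu⟩ := Finset.mem_image.mp hvF
      have hH := hI.hist15_eq u v (hFS u hu) hv.1 hLu
      have htx : Transmits G L step t v := by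
        rw [Transmits, ← hLu, ← hH]
        exact (mem_freshTransmitters.mp hu).1
      exact hv.2 (Finset.mem_image_of_mem comp (mem_freshTransmitters.mpr ⟨htx, hv.1⟩))
  · rw [Finset.mem_union, not_or] at hv hw
    exact hist15_succ_eq_of_eq hL (hI.hist15_eq v w hv.1 hw.1 hL)
      (listenEvent_eq_of_forall_transmits_adj (adj_of_transmits_of_notMem hcomp hv.1 hv.2)
        (adj_of_transmits_of_notMem hcomp hw.1 hw.2))

end HistoryInvariant

theorem exists_historyInvariant (hcomp : ∀ x y, comp x ≠ comp y → G.Adj x y) (T : ℕ) :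
    ∃ S D, HistoryInvariant G L step comp T S D := by
  induction T with
  | zero => exact ⟨∅, ∅, by simp, by simp, by simp, fun _ _ _ _ _ => rfl⟩
  | succ t ih =>
    obtain ⟨S, D, hI⟩ := ih
    by_cases hF : 2 < ((freshTransmitters G L step comp t S).image comp).card
    · exact ⟨S, D, hI.succ_of_collision hcomp hF⟩
    · exact ⟨_, _, hI.succ_of_card_le_two hcomp (not_lt.mp hF)⟩

end Join

theorem degree_eq_of_hist15_eq {V : Type*} [Fintype V] {G : SimpleGraph V} {L : V → List Bool}
    {step : List Bool → List Event15 → Option (List Bool)}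
    {out : List Bool → List Event15 → (N : ℕ) × (SimpleGraph (Fin N) × Fin N)} {T : ℕ}
    (hsolve : ∀ v : V, ∃ φ : (out (L v) (hist15 G L step T v)).2.1 ≃g G,
      φ (out (L v) (hist15 G L step T v)).2.2 = v)
    {v w : V} (hL : L v = L w) (hH : hist15 G L step T v = hist15 G L step T w) :
    G.degree v = G.degree w := by
  obtain ⟨φ, hφ⟩ := hsolve v
  have hw := hsolve w
  rw [← hL, ← hH] at hw
  obtain ⟨ψ, hψ⟩ := hw
  rw [← hφ, ← hψ, φ.degree_eq, ψ.degree_eq]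

section Gn

variable {s : ℕ}

theorem gn_adj {x y : Fin s × (Fin (s / 2) ⊕ Fin (s / 2))} :
    (Gn s).Adj x y ↔ x ≠ y ∧ (x.1 ≠ y.1 ∨ halfAdj (s / 2) x.2 y.2) :=
  Iff.rfl

theorem gn_adj_of_fst_ne {x y : Fin s × (Fin (s / 2) ⊕ Fin (s / 2))} (h : x.1 ≠ y.1) :
    (Gn s).Adj x y :=
  ⟨fun he => h (congrArg Prod.fst he), Or.inl h⟩

theorem gn_adj_inl_iff {c : Fin s} {j : Fin (s / 2)}
    {y : Fin s × (Fin (s / 2) ⊕ Fin (s / 2))} :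
    (Gn s).Adj (c, Sum.inl j) y ↔
      c ≠ y.1 ∨ ∃ t : Fin (s / 2), t ≤ j ∧ y = (c, Sum.inr t) := by
  rcases y with ⟨c', k | k⟩ <;> by_cases hc : c = c' <;> simp [gn_adj, halfAdj, hc]

theorem gn_degree_inl_strictMono (c : Fin s) :
    StrictMono fun j : Fin (s / 2) => (Gn s).degree (c, Sum.inl j) := by
  intro j j' hjj'
  simp only [← SimpleGraph.card_neighborFinset_eq_degree]
  refine Finset.card_lt_card ((Finset.ssubset_iff_of_subset fun y => ?_).mpr
    ⟨(c, Sum.inr j'), ?_, ?_⟩) <;> simp only [SimpleGraph.mem_neighborFinset, gn_adj_inl_iff]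
  · rintro (h | ⟨t, ht, rfl⟩)
    · exact Or.inl h
    · exact Or.inr ⟨t, ht.trans hjj'.le, rfl⟩
  · exact Or.inr ⟨j', le_rfl, rfl⟩
  · simpa using hjj'

theorem half_le_card_image_labels (step : List Bool → List Event15 → Option (List Bool))
    (out : List Bool → List Event15 → (N : ℕ) × (SimpleGraph (Fin N) × Fin N))
    (T : ℕ) (L : Fin s × (Fin (s / 2) ⊕ Fin (s / 2)) → List Bool)
    (hsolve : ∀ v : Fin s × (Fin (s / 2) ⊕ Fin (s / 2)),
      ∃ φ : (out (L v) (hist15 (Gn s) L step T v)).2.1 ≃g Gn s,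
        φ (out (L v) (hist15 (Gn s) L step T v)).2.2 = v) :
    s / 2 ≤ (Finset.univ.image L).card := by
  obtain ⟨S, D, hI⟩ := exists_historyInvariant (L := L) (step := step) (comp := Prod.fst)
    (fun _ _ => gn_adj_of_fst_ne) T
  by_contra! hk
  obtain ⟨c, -, hc⟩ := Finset.exists_mem_notMem_of_card_lt_card (s := S) (t := Finset.univ)
    (by have := hI.card_le_card_labels; simp only [Finset.card_univ, Fintype.card_fin]; omega)
  have hinj : Function.Injective fun j : Fin (s / 2) => L (c, Sum.inl j) := fun j j' h =>
    (gn_degree_inl_strictMono c).injective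
      (degree_eq_of_hist15_eq hsolve h (hI.hist15_eq _ _ hc hc h))
  have := Finset.card_le_card_of_injOn (s := Finset.univ) _
    (fun j _ => Finset.mem_image_of_mem L (Finset.mem_univ (c, Sum.inl j))) hinj.injOn
  simp only [Finset.card_univ, Fintype.card_fin] at this
  omega

end Gn

/-- any deterministic algorithm solving topology recognition on `G_n`
(`√n` even, `n > 8⁴`) in the radio model with collision detection — i.e. after `T`
rounds every node outputs a marked graph isomorphic to `G_n` with the marked node
mapped to itself — requires a labeling scheme with more than `n^{1/4}` distinct
labels. -/
theorem stmt15 (s n : ℕ) (hs : Even s) (hn : n = s * s) (hbig : 8 ^ 4 < n)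
    (step : List Bool → List Event15 → Option (List Bool))
    (out : List Bool → List Event15 → (N : ℕ) × (SimpleGraph (Fin N) × Fin N))
    (T : ℕ) (L : Fin s × (Fin (s / 2) ⊕ Fin (s / 2)) → List Bool)
    (hsolve : ∀ v : Fin s × (Fin (s / 2) ⊕ Fin (s / 2)),
      ∃ φ : (out (L v) (hist15 (Gn s) L step T v)).2.1 ≃g Gn s,
        φ (out (L v) (hist15 (Gn s) L step T v)).2.2 = v) :
    ((n : ℝ) ^ ((1 : ℝ) / 4)) < ((Finset.univ.image L).card : ℝ) := by
  have hk := half_le_card_image_labels step out T L hsolve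
  set k := (Finset.univ.image L).card
  obtain ⟨r, rfl⟩ := hs
  have hrk : r ≤ k := by omega
  have hnk : n < k ^ 4 := by
    subst hn
    have : 32 < r := by nlinarith
    nlinarith [Nat.mul_le_mul hrk hrk]
  rw [one_div, Real.rpow_inv_lt_iff_of_pos (by positivity) (by positivity) (by norm_num)]
  exact_mod_cast hnk
end
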